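/- In the approximate-partition-of-unity setup: if j ∈ {1, …, N}^d and v ∈ ℤ^d satisfies max_i |v_i| ≥ 2 and j + v ∈ {1, …, N}^d, then ‖Φ_{j+v}^{N,d}‖_{W^{k,∞}(I_j^N)} ≤ max{1, (2k)^{2k} α^k} · ε. -/

import Mathlib

/-!
The derivative `D^β Φ_{j+v}` of the product `Φ_{j+v}(x) = ∏ᵢ ρ_{jᵢ+vᵢ}(xᵢ)` is the product of the
one-variable derivatives `ρ_{jᵢ+vᵢ}^{(βᵢ)}(xᵢ)`. Write `ρ_b = (e_{b-1} - e_b)/2` with the edges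
`e_J(y) = tanh(α(y - J/N))`, `e_0 = 1`, `e_N = -1`. In a coordinate with `|vᵢ| ≥ 2` both edges of
`ρ_{jᵢ+vᵢ}` lie on the same side of the cell `I_{jᵢ}`, at distance at least `1/N`, where `tanh` is
within `1 - tanh(α/N) ≤ ε` of its limit `±1` and, by evenness and the monotonicity assumption, its
scaled derivatives `α^m |tanh^{(m)}|` are at most `ε`. Every other factor is bounded by
`α^m 2^m m! ≤ (α(2k)²)^m`, because `tanh' = 1 - tanh²` and the Leibniz rule give
`|tanh^{(n)}| ≤ 2^n n!`; their product is at most `max{1, (α(2k)²)^k}`.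
-/

/-- Partial derivative in direction `i`. -/
noncomputable def pder {d : ℕ} (i : Fin d) (f : (Fin d → ℝ) → ℝ) : (Fin d → ℝ) → ℝ :=
  fun x => fderiv ℝ f x (Pi.single i 1)

/-- Multi-index partial derivative `D^α f`. -/
noncomputable def mder {d : ℕ} (α : Fin d → ℕ) (f : (Fin d → ℝ) → ℝ) : (Fin d → ℝ) → ℝ :=
  (List.finRange d).foldl (fun g i => (pder i)^[α i] g) f

/-- `W^{k,∞}(S)` norm: `max_{|β| ≤ k} sup_{x ∈ S} |D^β f x|`. -/
noncomputable def sobNorm {d : ℕ} (k : ℕ) (S : Set (Fin d → ℝ)) (f : (Fin d → ℝ) → ℝ) : ℝ :=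
  ⨆ p : {q : (Fin d → ℕ) × (Fin d → ℝ) // (∑ i, q.1 i) ≤ k ∧ q.2 ∈ S}, |mder p.1.1 f p.1.2|

/-- The univariate bump `ρ_j^N` from the approximate partition of unity. -/
noncomputable def rhoPU (N : ℕ) (α : ℝ) (j : ℤ) (y : ℝ) : ℝ :=
  if j = 1 then 1 / 2 - 1 / 2 * Real.tanh (α * (y - 1 / N))
  else if j = (N : ℤ) then 1 / 2 * Real.tanh (α * (y - ((N : ℝ) - 1) / N)) + 1 / 2
  else 1 / 2 * Real.tanh (α * (y - ((j : ℝ) - 1) / N))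
    - 1 / 2 * Real.tanh (α * (y - (j : ℝ) / N))

/-- `Φ_j^{N,d}(x) = ∏ᵢ ρ_{jᵢ}^N(xᵢ)`. -/
noncomputable def PhiPU (d N : ℕ) (α : ℝ) (j : Fin d → ℤ) (x : Fin d → ℝ) : ℝ :=
  ∏ i, rhoPU N α (j i) (x i)

/-- The open box `I_j^N = ∏ᵢ ((jᵢ-1)/N, jᵢ/N)`. -/
def IboxPU (d N : ℕ) (j : Fin d → ℤ) : Set (Fin d → ℝ) :=
  {x | ∀ i, ((j i : ℝ) - 1) / N < x i ∧ x i < (j i : ℝ) / N}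

open Real
open scoped ContDiff Nat

namespace Real

@[fun_prop]
lemma contDiff_tanh {n : WithTop ℕ∞} : ContDiff ℝ n tanh := by
  simp only [funext tanh_eq_sinh_div_cosh]
  exact contDiff_sinh.div contDiff_cosh fun x => (cosh_pos x).ne'

lemma hasDerivAt_tanh (x : ℝ) : HasDerivAt tanh (1 - tanh x ^ 2) x := by
  have h := (hasDerivAt_sinh x).div (hasDerivAt_cosh x) (cosh_pos x).ne'
  rw [tanh_eq_sinh_div_cosh, div_pow, one_sub_div (pow_ne_zero 2 (cosh_pos x).ne'),
    show tanh = sinh / cosh from funext tanh_eq_sinh_div_cosh]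
  simpa only [sq] using h

lemma deriv_tanh : deriv tanh = fun x => 1 - tanh x * tanh x := by
  ext x; rw [(hasDerivAt_tanh x).deriv, sq]

lemma monotone_tanh : Monotone tanh :=
  monotone_of_deriv_nonneg (fun x => (hasDerivAt_tanh x).differentiableAt) fun x => by
    rw [(hasDerivAt_tanh x).deriv, sub_nonneg]; exact (tanh_sq_lt_one x).le

lemma iteratedDeriv_tanh_add_two (n : ℕ) (x : ℝ) :
    iteratedDeriv (n + 2) tanh x = -∑ i ∈ Finset.range (n + 2),
      (n + 1).choose i * iteratedDeriv i tanh x * iteratedDeriv (n + 1 - i) tanh x := by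
  rw [iteratedDeriv_succ', deriv_tanh, iteratedDeriv_const_sub n.succ_pos, iteratedDeriv_neg,
    iteratedDeriv_fun_mul (by fun_prop) (by fun_prop)]

lemma abs_iteratedDeriv_tanh_le (n : ℕ) (x : ℝ) :
    |iteratedDeriv n tanh x| ≤ 2 ^ n * n ! := by
  induction n using Nat.strong_induction_on generalizing x with
  | _ n ih =>
  rcases n with _ | _ | n
  · simpa using (abs_tanh_lt_one x).le
  · rw [iteratedDeriv_one, (hasDerivAt_tanh x).deriv,
      abs_of_nonneg (sub_nonneg.2 (tanh_sq_lt_one x).le)]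
    norm_num
    linarith [sq_nonneg (tanh x)]
  · have term : ∀ i ∈ Finset.range (n + 2),
        |(n + 1).choose i * iteratedDeriv i tanh x * iteratedDeriv (n + 1 - i) tanh x|
          ≤ 2 ^ (n + 1) * (n + 1)! := by
      intro i hi
      have hi : i ≤ n + 1 := Finset.mem_range_succ_iff.mp hi
      calc _ = (n + 1).choose i * |iteratedDeriv i tanh x| *
            |iteratedDeriv (n + 1 - i) tanh x| := by
            rw [abs_mul, abs_mul, Nat.abs_cast]
        _ ≤ (n + 1).choose i * (2 ^ i * i !) * (2 ^ (n + 1 - i) * (n + 1 - i)!) := by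
            gcongr
            · exact ih i (by omega) x
            · exact ih _ (by omega) x
        _ = 2 ^ (i + (n + 1 - i)) * ((n + 1).choose i * i ! * (n + 1 - i)! : ℕ) := by
            push_cast; ring
        _ = 2 ^ (n + 1) * (n + 1)! := by
            rw [Nat.choose_mul_factorial_mul_factorial hi, Nat.add_sub_cancel' hi]
    calc |iteratedDeriv (n + 2) tanh x|
        ≤ ∑ i ∈ Finset.range (n + 2), (2 ^ (n + 1) * (n + 1)! : ℝ) := by
          rw [iteratedDeriv_tanh_add_two, abs_neg]
          exact (Finset.abs_sum_le_sum_abs _ _).trans (Finset.sum_le_sum term)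
      _ = (n + 2 : ℝ) * (2 ^ (n + 1) * (n + 1)!) := by
          rw [Finset.sum_const, Finset.card_range, nsmul_eq_mul]; push_cast; ring
      _ ≤ 2 * ((n + 2 : ℝ) * (2 ^ (n + 1) * (n + 1)!)) :=
          le_mul_of_one_le_left (by positivity) one_le_two
      _ = 2 ^ (n + 2) * (n + 2)! := by push_cast [Nat.factorial_succ (n + 1)]; ring

lemma abs_iteratedDeriv_tanh_neg (n : ℕ) (x : ℝ) :
    |iteratedDeriv n tanh (-x)| = |iteratedDeriv n tanh x| := by
  have h := iteratedDeriv_comp_neg n tanh x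
  simp only [tanh_neg, iteratedDeriv_fun_neg, smul_eq_mul] at h
  rw [← abs_neg (iteratedDeriv n tanh x), h, abs_mul, abs_pow, abs_neg, abs_one, one_pow,
    one_mul]


lemma abs_iteratedDeriv_tanh_le_of_le_abs {m : ℕ} {R r t : ℝ}
    (hdec : AntitoneOn (fun x => |iteratedDeriv m tanh x|) (Set.Ici R)) (hRr : R ≤ r)
    (hrt : r ≤ |t|) : |iteratedDeriv m tanh t| ≤ |iteratedDeriv m tanh r| := by
  calc |iteratedDeriv m tanh t| = |iteratedDeriv m tanh (|t|)| := by
        rcases abs_choice t with h | h <;> rw [h]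
        rw [abs_iteratedDeriv_tanh_neg]
    _ ≤ |iteratedDeriv m tanh r| := hdec hRr (hRr.trans hrt) hrt

end Real

noncomputable def edgePU (N : ℕ) (α : ℝ) (J : ℤ) : ℝ → ℝ :=
  if J = 0 then fun _ => 1 else if J = N then fun _ => -1 else fun y => tanh (α * (y - J / N))

section Edge

variable {N : ℕ} {α : ℝ} {J : ℤ}

lemma contDiff_edgePU : ContDiff ℝ ∞ (edgePU N α J) := by
  unfold edgePU; split_ifs <;> fun_prop

lemma iteratedDeriv_edgePU_of_ne (hJ0 : J ≠ 0) (hJN : J ≠ N) (m : ℕ) (y : ℝ) :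
    iteratedDeriv m (edgePU N α J) y = α ^ m * iteratedDeriv m tanh (α * (y - J / N)) := by
  simp only [edgePU, if_neg hJ0, if_neg hJN]
  rw [iteratedDeriv_comp_sub_const (f := fun z => tanh (α * z)),
    iteratedDeriv_comp_const_mul contDiff_tanh]

lemma iteratedDeriv_edgePU_of_eq (hJ : J = 0 ∨ J = N) {m : ℕ} (hm : 0 < m) (y : ℝ) :
    iteratedDeriv m (edgePU N α J) y = 0 := by
  obtain ⟨c, hc⟩ : ∃ c : ℝ, edgePU N α J = fun _ => c := by
    unfold edgePU; split_ifs <;> first | exact ⟨_, rfl⟩ | tauto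
  rw [hc, iteratedDeriv_const, if_neg hm.ne']

lemma abs_iteratedDeriv_edgePU_le (hα : 0 ≤ α) (m : ℕ) (y : ℝ) :
    |iteratedDeriv m (edgePU N α J) y| ≤ α ^ m * (2 ^ m * m !) := by
  by_cases hJ : J = 0 ∨ J = N
  · rcases Nat.eq_zero_or_pos m with rfl | hm
    · unfold edgePU; split_ifs <;> simp [(abs_tanh_lt_one _).le]
    · rw [iteratedDeriv_edgePU_of_eq hJ hm, abs_zero]; positivity
  · push Not at hJ
    rw [iteratedDeriv_edgePU_of_ne hJ.1 hJ.2, abs_mul, abs_of_nonneg (pow_nonneg hα m)]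
    gcongr
    exact abs_iteratedDeriv_tanh_le m _

lemma abs_iteratedDeriv_edgePU_le_of_far {R : ℝ} {m : ℕ} {y : ℝ} (hα : 0 ≤ α)
    (hdec : AntitoneOn (fun x => |iteratedDeriv m tanh x|) (Set.Ici R)) (hαR : R ≤ α / N)
    (hm : 0 < m) (hy : 1 / N ≤ |y - J / N|) :
    |iteratedDeriv m (edgePU N α J) y| ≤ α ^ m * |iteratedDeriv m tanh (α / N)| := by
  by_cases hJ : J = 0 ∨ J = N
  · rw [iteratedDeriv_edgePU_of_eq hJ hm, abs_zero]; positivity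
  · push Not at hJ
    rw [iteratedDeriv_edgePU_of_ne hJ.1 hJ.2, abs_mul, abs_of_nonneg (pow_nonneg hα m)]
    refine mul_le_mul_of_nonneg_left (abs_iteratedDeriv_tanh_le_of_le_abs hdec hαR ?_)
      (pow_nonneg hα m)
    rw [abs_mul, abs_of_nonneg hα, div_eq_mul_one_div]
    gcongr

lemma abs_edgePU_sub_one_le (hα : 0 ≤ α) (hJN : J ≠ N) {y : ℝ} (hy : 1 / N ≤ y - J / N) :
    |edgePU N α J y - 1| ≤ 1 - tanh (α / N) := by
  by_cases hJ0 : J = 0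
  · simpa [edgePU, hJ0] using (tanh_lt_one _).le
  have htanh : tanh (α / N) ≤ tanh (α * (y - J / N)) := by
    apply monotone_tanh
    rw [div_eq_mul_one_div]
    gcongr
  simp only [edgePU, if_neg hJ0, if_neg hJN]
  rw [abs_sub_comm, abs_of_nonneg (sub_nonneg.2 (tanh_lt_one _).le)]
  linarith

lemma abs_edgePU_add_one_le (hα : 0 ≤ α) (hJ0 : J ≠ 0) {y : ℝ} (hy : 1 / N ≤ J / N - y) :
    |edgePU N α J y + 1| ≤ 1 - tanh (α / N) := by
  by_cases hJN : J = N
  · simp only [edgePU, if_neg hJ0, if_pos hJN, neg_add_cancel, abs_zero, sub_nonneg]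
    exact (tanh_lt_one _).le
  have htanh : tanh (α / N) ≤ -tanh (α * (y - J / N)) := by
    rw [← tanh_neg]
    apply monotone_tanh
    rw [div_eq_mul_one_div, ← mul_neg, neg_sub]
    gcongr
  simp only [edgePU, if_neg hJ0, if_neg hJN]
  rw [abs_of_nonneg (by linarith [neg_one_lt_tanh (α * (y - J / N))])]
  linarith

end Edge

section Bump

variable {N : ℕ} {α : ℝ} {b : ℤ}

lemma contDiff_rhoPU : ContDiff ℝ ∞ (rhoPU N α b) := by
  unfold rhoPU; split_ifs <;> fun_prop

lemma rhoPU_eq_edgePU (hN : 2 ≤ N) (hb1 : 1 ≤ b) (hbN : b ≤ N) :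
    rhoPU N α b = fun y => (edgePU N α (b - 1) y - edgePU N α b y) / 2 := by
  ext y
  unfold rhoPU edgePU
  split_ifs <;> subst_vars <;> first | omega | (push_cast; ring)

lemma iteratedDeriv_rhoPU (hN : 2 ≤ N) (hb1 : 1 ≤ b) (hbN : b ≤ N) (m : ℕ) (y : ℝ) :
    iteratedDeriv m (rhoPU N α b) y =
      (iteratedDeriv m (edgePU N α (b - 1)) y - iteratedDeriv m (edgePU N α b) y) / 2 := by
  rw [rhoPU_eq_edgePU hN hb1 hbN, iteratedDeriv_div_const,
    iteratedDeriv_fun_sub (contDiff_edgePU.contDiffAt.of_le (mod_cast le_top))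
      (contDiff_edgePU.contDiffAt.of_le (mod_cast le_top))]

lemma abs_iteratedDeriv_rhoPU_le (hα : 0 ≤ α) (hN : 2 ≤ N) (hb1 : 1 ≤ b) (hbN : b ≤ N)
    (m : ℕ) (y : ℝ) : |iteratedDeriv m (rhoPU N α b) y| ≤ α ^ m * (2 ^ m * m !) := by
  rw [iteratedDeriv_rhoPU hN hb1 hbN, abs_div, abs_two]
  linarith [abs_sub (iteratedDeriv m (edgePU N α (b - 1)) y) (iteratedDeriv m (edgePU N α b) y),
    abs_iteratedDeriv_edgePU_le (N := N) (J := b - 1) hα m y,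
    abs_iteratedDeriv_edgePU_le (N := N) (J := b) hα m y]

lemma two_pow_mul_factorial_le {m k : ℕ} (hm : m ≤ k) : 2 ^ m * m ! ≤ ((2 * k) ^ 2) ^ m := by
  calc 2 ^ m * m ! ≤ 2 ^ m * k ^ m := by
        gcongr; exact (Nat.factorial_le_pow m).trans (Nat.pow_le_pow_left hm m)
    _ = (2 * k) ^ m := (mul_pow 2 k m).symm
    _ ≤ ((2 * k) ^ m) ^ 2 := Nat.le_self_pow two_ne_zero _
    _ = ((2 * k) ^ 2) ^ m := by rw [← pow_mul, ← pow_mul, mul_comm m]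

lemma abs_iteratedDeriv_rhoPU_le_pow (hα : 0 ≤ α) (hN : 2 ≤ N) (hb1 : 1 ≤ b) (hbN : b ≤ N)
    {m k : ℕ} (hm : m ≤ k) (y : ℝ) :
    |iteratedDeriv m (rhoPU N α b) y| ≤ (α * (2 * k) ^ 2) ^ m := by
  refine (abs_iteratedDeriv_rhoPU_le hα hN hb1 hbN m y).trans ?_
  rw [mul_pow]
  gcongr
  exact_mod_cast two_pow_mul_factorial_le hm

lemma one_div_le_sub_of_add_two_le {a J : ℤ} {y : ℝ} (hy : ((a : ℝ) - 1) / N < y)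
    (hJ : J + 2 ≤ a) : 1 / N ≤ y - J / N := by
  have : ((J : ℝ) + 1) / N ≤ (a - 1) / N :=
    div_le_div_of_nonneg_right (by exact_mod_cast (by omega : J + 1 ≤ a - 1)) N.cast_nonneg
  rw [add_div] at this
  linarith

lemma one_div_le_sub_of_add_one_le {a J : ℤ} {y : ℝ} (hy : y < (a : ℝ) / N)
    (hJ : a + 1 ≤ J) : 1 / N ≤ J / N - y := by
  have : (a : ℝ) / N ≤ (J - 1) / N :=
    div_le_div_of_nonneg_right (by exact_mod_cast (by omega : a ≤ J - 1)) N.cast_nonneg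
  rw [sub_div] at this
  linarith

lemma abs_iteratedDeriv_rhoPU_le_of_far {R ε : ℝ} {a : ℤ} {m : ℕ} {y : ℝ} (hα : 0 ≤ α)
    (ha1 : 1 ≤ a) (haN : a ≤ N) (hb1 : 1 ≤ b) (hbN : b ≤ N) (hab : 2 ≤ |b - a|)
    (hy : y ∈ Set.Ioo (((a : ℝ) - 1) / N) ((a : ℝ) / N))
    (hdec : 0 < m → AntitoneOn (fun x => |iteratedDeriv m tanh x|) (Set.Ici R))
    (hαR : R ≤ α / N) (hα1 : 1 - tanh (α / N) ≤ ε)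
    (hαm : 0 < m → α ^ m * |iteratedDeriv m tanh (α / N)| ≤ ε) :
    |iteratedDeriv m (rhoPU N α b) y| ≤ ε := by
  have hside := le_abs'.1 hab
  have hN : 2 ≤ N := by omega
  -- both edges of `ρ_b` lie on the same side of the cell, at distance at least `1 / N`
  obtain ⟨σ, hedge⟩ : ∃ σ : ℝ, ∀ J, J = b - 1 ∨ J = b →
      |edgePU N α J y - σ| ≤ 1 - tanh (α / N) ∧ 1 / N ≤ |y - J / N| := by
    rcases hside with h | h
    · refine ⟨1, fun J hJ => ?_⟩
      have hdist := one_div_le_sub_of_add_two_le hy.1 (by omega : J + 2 ≤ a)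
      exact ⟨abs_edgePU_sub_one_le hα (by omega) hdist, hdist.trans (le_abs_self _)⟩
    · refine ⟨-1, fun J hJ => ?_⟩
      have hdist := one_div_le_sub_of_add_one_le hy.2 (by omega : a + 1 ≤ J)
      refine ⟨by simpa using abs_edgePU_add_one_le hα (by omega) hdist, ?_⟩
      exact hdist.trans ((le_abs_self _).trans (abs_sub_comm _ _).le)
  rw [iteratedDeriv_rhoPU hN hb1 hbN, abs_div, abs_two]
  rcases Nat.eq_zero_or_pos m with rfl | hm
  · simp only [iteratedDeriv_zero]
    linarith [(hedge (b - 1) (Or.inl rfl)).1, (hedge b (Or.inr rfl)).1,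
      abs_sub_le (edgePU N α (b - 1) y) σ (edgePU N α b y), abs_sub_comm (edgePU N α b y) σ]
  · have hder : ∀ J, J = b - 1 ∨ J = b → |iteratedDeriv m (edgePU N α J) y| ≤ ε := fun J hJ =>
      (abs_iteratedDeriv_edgePU_le_of_far hα (hdec hm) hαR hm (hedge J hJ).2).trans (hαm hm)
    linarith [hder (b - 1) (Or.inl rfl), hder b (Or.inr rfl),
      abs_sub (iteratedDeriv m (edgePU N α (b - 1)) y) (iteratedDeriv m (edgePU N α b) y)]

end Bump

section SeparableProduct

variable {d : ℕ}

lemma pder_prod_apply (h : Fin d → ℝ → ℝ) (hh : ∀ l, Differentiable ℝ (h l)) (i : Fin d)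
    (x : Fin d → ℝ) :
    pder i (fun x => ∏ l, h l (x l)) x =
      deriv (h i) (x i) * ∏ l ∈ Finset.univ.erase i, h l (x l) := by
  have hF := HasFDerivAt.finsetProd (u := Finset.univ) (g := fun l (y : Fin d → ℝ) => h l (y l))
    fun l _ => (hh l (x l)).hasDerivAt.comp_hasFDerivAt x (hasFDerivAt_apply (𝕜 := ℝ) l x)
  rw [pder, hF.fderiv, sum_apply, Finset.sum_eq_single i]
  · simp [mul_comm]
  · intro l _ hl
    simp [Pi.single_eq_of_ne hl]
  · simp

variable (g : Fin d → ℝ → ℝ)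

lemma pder_prod_iteratedDeriv (hg : ∀ l, ContDiff ℝ ∞ (g l)) (γ : Fin d → ℕ) (i : Fin d) :
    pder i (fun x => ∏ l, iteratedDeriv (γ l) (g l) (x l)) =
      fun x => ∏ l, iteratedDeriv ((γ + Pi.single i 1 : Fin d → ℕ) l) (g l) (x l) := by
  ext x
  rw [pder_prod_apply _ fun l =>
    (hg l).differentiable_iteratedDeriv (γ l) (by exact_mod_cast ENat.natCast_lt_top _),
    ← Finset.mul_prod_erase _ _ (Finset.mem_univ i)]
  congr 1
  · simp [iteratedDeriv_succ]
  · refine Finset.prod_congr rfl fun l hl => ?_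
    simp [Pi.single_eq_of_ne (Finset.ne_of_mem_erase hl)]

lemma iterate_pder_prod_iteratedDeriv (hg : ∀ l, ContDiff ℝ ∞ (g l)) (γ : Fin d → ℕ)
    (i : Fin d) (m : ℕ) :
    (pder i)^[m] (fun x => ∏ l, iteratedDeriv (γ l) (g l) (x l)) =
      fun x => ∏ l, iteratedDeriv ((γ + Pi.single i m : Fin d → ℕ) l) (g l) (x l) := by
  induction m with
  | zero => simp
  | succ m ih =>
    rw [Function.iterate_succ_apply', ih, pder_prod_iteratedDeriv g hg, add_assoc,
      ← Pi.single_add]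

lemma foldl_pder_prod_iteratedDeriv (hg : ∀ l, ContDiff ℝ ∞ (g l)) (β : Fin d → ℕ)
    (L : List (Fin d)) (γ : Fin d → ℕ) :
    L.foldl (fun f i => (pder i)^[β i] f) (fun x => ∏ l, iteratedDeriv (γ l) (g l) (x l)) =
      fun x => ∏ l, iteratedDeriv ((γ + (L.map fun i => Pi.single i (β i)).sum) l)
        (g l) (x l) := by
  induction L generalizing γ with
  | nil => simp
  | cons i L ih =>
    rw [List.foldl_cons, iterate_pder_prod_iteratedDeriv g hg, ih, List.map_cons, List.sum_cons,
      add_assoc]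

lemma mder_prod (hg : ∀ l, ContDiff ℝ ∞ (g l)) (β : Fin d → ℕ) :
    mder β (fun x => ∏ l, g l (x l)) = fun x => ∏ l, iteratedDeriv (β l) (g l) (x l) := by
  rw [mder]
  simpa only [Pi.zero_apply, iteratedDeriv_zero, zero_add, ← Fin.sum_univ_def,
    Finset.univ_sum_single] using foldl_pder_prod_iteratedDeriv g hg β (List.finRange d) 0

end SeparableProduct

lemma pow_le_max_one_pow {X : ℝ} (hX : 0 ≤ X) {s k : ℕ} (hs : s ≤ k) :
    X ^ s ≤ max 1 (X ^ k) := by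
  rcases le_or_gt X 1 with h | h
  · exact (pow_le_one₀ hX h).trans (le_max_left _ _)
  · exact (pow_le_pow_right₀ h.le hs).trans (le_max_right _ _)

lemma abs_prod_le_mul_max_one_pow {ι : Type*} [Fintype ι] [DecidableEq ι] {f : ι → ℝ}
    {β : ι → ℕ} {X ε : ℝ} {k : ℕ} (hX : 0 ≤ X) (hβ : ∑ l, β l ≤ k) (i : ι) (hi : |f i| ≤ ε)
    (hf : ∀ l ≠ i, |f l| ≤ X ^ β l) : |∏ l, f l| ≤ ε * max 1 (X ^ k) := by
  rw [Finset.abs_prod, ← Finset.mul_prod_erase _ _ (Finset.mem_univ i)]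
  have hrest : ∏ l ∈ Finset.univ.erase i, |f l| ≤ X ^ ∑ l ∈ Finset.univ.erase i, β l := by
    rw [← Finset.prod_pow_eq_pow_sum]
    exact Finset.prod_le_prod (fun l _ => abs_nonneg _) fun l hl =>
      hf l (Finset.ne_of_mem_erase hl)
  have hsum : ∑ l ∈ Finset.univ.erase i, β l ≤ k :=
    (Finset.sum_le_sum_of_subset (Finset.erase_subset _ _)).trans hβ
  exact mul_le_mul hi (hrest.trans (pow_le_max_one_pow hX hsum))
    (Finset.prod_nonneg fun _ _ => abs_nonneg _) ((abs_nonneg _).trans hi)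

theorem partition_of_unity_far_general (d N k : ℕ)
    (R : ℝ)
    (hdec : ∀ m : ℕ, 1 ≤ m → m ≤ k →
      AntitoneOn (fun x : ℝ => |iteratedDeriv m Real.tanh x|) (Set.Ici R))
    (ε α : ℝ) (hα : 0 < α)
    (hαR : R ≤ α / N) (hα1 : 1 - Real.tanh (α / N) ≤ ε)
    (hαm : ∀ m : ℕ, 1 ≤ m → m ≤ k → α ^ m * |iteratedDeriv m Real.tanh (α / N)| ≤ ε)
    (j : Fin d → ℤ) (hj : ∀ i, 1 ≤ j i ∧ j i ≤ (N : ℤ))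
    (v : Fin d → ℤ) (hv : ∃ i, 2 ≤ |v i|)
    (hjv : ∀ i, 1 ≤ j i + v i ∧ j i + v i ≤ (N : ℤ)) :
    sobNorm k (IboxPU d N j) (PhiPU d N α (fun i => j i + v i)) ≤
      max 1 ((2 * (k : ℝ)) ^ (2 * k) * α ^ k) * ε := by
  obtain ⟨i0, hi0⟩ := hv
  have hN : 2 ≤ N := by
    have := hj i0; have := hjv i0; have := le_abs'.1 hi0; omega
  have hε : 0 ≤ ε := (sub_nonneg.2 (tanh_lt_one _).le).trans hα1
  refine Real.iSup_le ?_ (mul_nonneg (zero_le_one.trans (le_max_left _ _)) hε)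
  rintro ⟨⟨β, x⟩, hβ, hx⟩
  have hβk : ∀ l, β l ≤ k := fun l => (Finset.single_le_sum (fun l _ => (β l).zero_le)
    (Finset.mem_univ l)).trans hβ
  rw [mul_comm, show (2 * (k : ℝ)) ^ (2 * k) * α ^ k = (α * (2 * k) ^ 2) ^ k by
    rw [mul_pow α, ← pow_mul, mul_comm]]
  change |mder β (fun x => ∏ l, rhoPU N α (j l + v l) (x l)) x| ≤ _
  rw [mder_prod _ (fun l => contDiff_rhoPU) β]
  refine abs_prod_le_mul_max_one_pow (by positivity) hβ i0 ?_ fun l _ => ?_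
  · exact abs_iteratedDeriv_rhoPU_le_of_far hα.le (hj i0).1 (hj i0).2 (hjv i0).1 (hjv i0).2
      (by simpa using hi0) (hx i0) (fun hm => hdec _ hm (hβk i0)) hαR hα1
      (fun hm => hαm _ hm (hβk i0))
  · exact abs_iteratedDeriv_rhoPU_le_pow hα.le hN (hjv l).1 (hjv l).2 (hβk l) (x l)

/-- **Lemma 4.2.** In the approximate-partition-of-unity setup, if `j ∈ {1,…,N}^d` and
`v ∈ ℤ^d` with `max_i |v_i| ≥ 2` and `j + v ∈ {1,…,N}^d`, then
`‖Φ_{j+v}^{N,d}‖_{W^{k,∞}(I_j^N)} ≤ max{1, (2k)^{2k} α^k} ε`. -/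
theorem partition_of_unity_far (d N k : ℕ) (hd : 1 ≤ d) (hN : 1 ≤ N)
    (R : ℝ) (hR : 0 < R)
    (hdec : ∀ m : ℕ, 1 ≤ m → m ≤ k →
      AntitoneOn (fun x : ℝ => |iteratedDeriv m Real.tanh x|) (Set.Ici R))
    (ε α : ℝ) (hε : 0 < ε) (hα : 0 < α)
    (hαR : R ≤ α / N) (hα1 : 1 - Real.tanh (α / N) ≤ ε)
    (hαm : ∀ m : ℕ, 1 ≤ m → m ≤ k → α ^ m * |iteratedDeriv m Real.tanh (α / N)| ≤ ε)
    (j : Fin d → ℤ) (hj : ∀ i, 1 ≤ j i ∧ j i ≤ (N : ℤ))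
    (v : Fin d → ℤ) (hv : ∃ i, 2 ≤ |v i|)
    (hjv : ∀ i, 1 ≤ j i + v i ∧ j i + v i ≤ (N : ℤ)) :
    sobNorm k (IboxPU d N j) (PhiPU d N α (fun i => j i + v i)) ≤
      max 1 ((2 * (k : ℝ)) ^ (2 * k) * α ^ k) * ε :=
  partition_of_unity_far_general d N k R hdec ε α hα hαR hα1 hαm j hj v hv hjv
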